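/- All four faces of a truncated hyperideal anti-de Sitter tetrahedron are space-like: if v₁,...,v₄ are the vertices of such a tetrahedron, then for each i ∈ {1,2,3,4} and every nonzero vector u ∈ ℝ⁴ with ⟨u,vⱼ⟩ = 0 for all three indices j ≠ i, one has ⟨u,u⟩ < 0; in particular every outward unit normal vector uᵢ satisfies ⟨uᵢ,uᵢ⟩ = −1. -/
import Mathlib


noncomputable section

/-- The symmetric bilinear form of signature (2,2) on ℝ⁴ (the Lorentzian space E^{2,2}). -/
def bil (x y : Fin 4 → ℝ) : ℝ := x 0 * y 0 + x 1 * y 1 - x 2 * y 2 - x 3 * y 3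

/-- The vertices of a truncated hyperideal anti-de Sitter tetrahedron: four linearly independent
unit vectors such that each straight segment between two of them meets B^{2,2}. -/
def IsAdSTetra (v : Fin 4 → (Fin 4 → ℝ)) : Prop :=
  LinearIndependent ℝ v ∧ (∀ i, bil (v i) (v i) = 1) ∧
  ∀ i j, i ≠ j → ∃ t ∈ Set.Icc (0 : ℝ) 1,
    bil (t • v i + (1 - t) • v j) (t • v i + (1 - t) • v j) < 0

lemma bil_symm (x y : Fin 4 → ℝ) : bil x y = bil y x := by simp [bil]; ring

lemma bil_comb (x y0 y1 y2 y3 : Fin 4 → ℝ) (a0 a1 a2 a3 : ℝ) :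
    bil x (a0 • y0 + a1 • y1 + a2 • y2 + a3 • y3)
      = a0 * bil x y0 + a1 * bil x y1 + a2 * bil x y2 + a3 * bil x y3 := by
  simp [bil, smul_eq_mul]; ring

lemma bil_seg (x y : Fin 4 → ℝ) (t : ℝ) :
    bil (t • x + (1 - t) • y) (t • x + (1 - t) • y)
      = t^2 * bil x x + 2 * t * (1-t) * bil x y + (1-t)^2 * bil y y := by
  simp [bil, smul_eq_mul]; ring

/-- Key negativity of the complementary 3×3 minor. -/
lemma adj00_neg (w : Fin 4 → Fin 4 → ℝ) (h1 : ∀ k, bil (w k) (w k) = 1)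
    (hlt : ∀ k l, k ≠ l → bil (w k) (w l) < -1) :
    (Matrix.adjugate (Matrix.of fun k l => bil (w k) (w l))) 0 0 < 0 := by
  rw [Matrix.adjugate_apply]
  set a := bil (w 1) (w 2) with ha
  set b := bil (w 1) (w 3) with hb
  set c := bil (w 2) (w 3) with hc
  have e : ((Matrix.of fun k l => bil (w k) (w l)).updateRow 0 (Pi.single 0 1))
      = !![(1:ℝ),0,0,0; bil (w 1) (w 0), 1, a, b; bil (w 2) (w 0), a, 1, c;
           bil (w 3) (w 0), b, c, 1] := by
    ext k l
    fin_cases k <;> fin_cases l <;>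
      simp [Matrix.updateRow_apply, h1, ha, hb, hc, bil_symm (w 2) (w 1),
        bil_symm (w 3) (w 1), bil_symm (w 3) (w 2)]
  rw [e]
  have edet : Matrix.det !![(1:ℝ),0,0,0; bil (w 1) (w 0), 1, a, b; bil (w 2) (w 0), a, 1, c;
      bil (w 3) (w 0), b, c, 1] = 1 + 2*a*b*c - a^2 - b^2 - c^2 := by
    simp [Matrix.det_succ_row_zero, Fin.sum_univ_succ]
    ring
  rw [edet]
  have hA : a < -1 := hlt 1 2 (by decide)
  have hB : b < -1 := hlt 1 3 (by decide)
  have hC : c < -1 := hlt 2 3 (by decide)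
  nlinarith [mul_pos (by linarith : (0:ℝ) < -a) (by linarith : (0:ℝ) < -b),
    mul_pos (mul_pos (by linarith : (0:ℝ) < -a) (by linarith : (0:ℝ) < -b))
      (by linarith : (0:ℝ) < -c), sq_nonneg (a-b), sq_nonneg (a+b), sq_nonneg c]

/-- All four faces of a truncated hyperideal anti-de Sitter tetrahedron are space-like: every
nonzero vector orthogonal to the face opposite a vertex has negative self-pairing; in particular
every outward unit normal vector uᵢ satisfies ⟨uᵢ,uᵢ⟩ = −1. -/
theorem stmt4 (v : Fin 4 → (Fin 4 → ℝ)) (hv : IsAdSTetra v) :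
    (∀ i, ∀ u : Fin 4 → ℝ, u ≠ 0 → (∀ j, j ≠ i → bil u (v j) = 0) → bil u u < 0) ∧
    (∀ i, ∀ u : Fin 4 → ℝ, 0 < bil u (v i) → |bil u u| = 1 →
      (∀ j, j ≠ i → bil u (v j) = 0) → bil u u = -1) := by
  obtain ⟨hli, hunit, hseg⟩ := hv
  -- pairwise products are < -1
  have hlt : ∀ i j, i ≠ j → bil (v i) (v j) < -1 := by
    intro i j hij
    obtain ⟨t, ⟨ht0, ht1⟩, hneg⟩ := hseg i j hij
    rw [bil_seg, hunit i, hunit j] at hneg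
    nlinarith [sq_nonneg (2*t - 1), mul_nonneg ht0 (by linarith : (0:ℝ) ≤ 1 - t)]
  -- the Gram matrix
  set G : Matrix (Fin 4) (Fin 4) ℝ := Matrix.of fun k l => bil (v k) (v l) with hGdef
  -- det G > 0
  set V : Matrix (Fin 4) (Fin 4) ℝ := Matrix.of fun k l => v k l with hVdef
  have hdetV : V.det ≠ 0 := by
    intro h0
    have h0' : V.transpose.det = 0 := by rwa [Matrix.det_transpose]
    obtain ⟨x, hx0, hx⟩ := (Matrix.exists_mulVec_eq_zero_iff).2 h0'
    have := (Fintype.linearIndependent_iff.1 hli) x ?_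
    · exact hx0 (funext fun k => this k)
    · funext l
      have := congrFun hx l
      simpa [Matrix.mulVec, dotProduct, Fin.sum_univ_four, hVdef, mul_comm] using this
  have hdetG : 0 < G.det := by
    have hGJ : G = V * (Matrix.diagonal ![1,1,-1,-1] * V.transpose) := by
      ext k l
      simp [hGdef, hVdef, Matrix.mul_apply, Matrix.diagonal, Fin.sum_univ_four, bil]
      ring
    rw [hGJ, Matrix.det_mul, Matrix.det_mul, Matrix.det_transpose]
    have : (Matrix.diagonal ![(1:ℝ),1,-1,-1]).det = 1 := by
      simp [Matrix.det_diagonal, Fin.prod_univ_four]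
    rw [this, one_mul]
    exact mul_self_pos.mpr hdetV
  -- basis machinery
  have hcard : Fintype.card (Fin 4) = Module.finrank ℝ (Fin 4 → ℝ) := by simp
  set B := basisOfLinearIndependentOfCardEqFinrank hli hcard with hBdef
  have hBcoe : ∀ k, B k = v k := fun k =>
    congrFun (coe_basisOfLinearIndependentOfCardEqFinrank hli hcard) k
  -- core lemma
  have key : ∀ i, ∀ u : Fin 4 → ℝ, u ≠ 0 → (∀ j, j ≠ i → bil u (v j) = 0) → bil u u < 0 := by
    intro i u hu0 horth
    set a : Fin 4 → ℝ := fun k => B.repr u k with hadef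
    have hu : u = a 0 • v 0 + a 1 • v 1 + a 2 • v 2 + a 3 • v 3 := by
      have := B.sum_repr u
      rw [Fin.sum_univ_four] at this
      simp only [hBcoe] at this
      exact this.symm
    set b : Fin 4 → ℝ := fun k => bil u (v k) with hbdef
    have hmv : G.mulVec a = b := by
      funext k
      have : bil (v k) u = a 0 * bil (v k) (v 0) + a 1 * bil (v k) (v 1)
          + a 2 * bil (v k) (v 2) + a 3 * bil (v k) (v 3) := by
        rw [hu, bil_comb]
      simp only [Matrix.mulVec, dotProduct, Fin.sum_univ_four, hGdef, Matrix.of_apply,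
        hbdef]
      rw [bil_symm u (v k), this]; ring
    have hadj : (Matrix.adjugate G).mulVec b = G.det • a := by
      rw [← hmv, Matrix.mulVec_mulVec, Matrix.adjugate_mul, Matrix.smul_mulVec,
        Matrix.one_mulVec]
    have hadji : Matrix.adjugate G i i * b i = G.det * a i := by
      have := congrFun hadj i
      simp only [Matrix.mulVec, dotProduct, Pi.smul_apply, smul_eq_mul] at this
      rw [← this]
      rw [Finset.sum_eq_single i]
      · intro l _ hl
        have : b l = 0 := horth l hl
        rw [this, mul_zero]
      · intro h; exact absurd (Finset.mem_univ i) h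
    -- bil u u = a i * b i
    have hbilu : bil u u = a i * b i := by
      have expand : bil u u = ∑ k : Fin 4, a k * b k := by
        rw [Fin.sum_univ_four]
        conv_lhs => rw [show bil u u = bil u (a 0 • v 0 + a 1 • v 1 + a 2 • v 2 + a 3 • v 3) by
          rw [← hu]]
        rw [bil_comb]
      rw [expand, Finset.sum_eq_single i
        (fun l _ hl => by rw [show b l = 0 from horth l hl, mul_zero])
        (fun h => absurd (Finset.mem_univ i) h)]
    -- b i ≠ 0
    have hbi : b i ≠ 0 := by
      intro hbi0
      have hball : ∀ l, b l = 0 := by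
        intro l
        by_cases hl : l = i
        · rw [hl]; exact hbi0
        · exact horth l hl
      have ha0 : a = 0 := by
        have h1 : G.mulVec a = 0 := by
          rw [hmv]; funext l; exact hball l
        have h2 : (Matrix.adjugate G).mulVec (G.mulVec a) = 0 := by
          rw [h1, Matrix.mulVec_zero]
        rw [Matrix.mulVec_mulVec, Matrix.adjugate_mul, Matrix.smul_mulVec,
          Matrix.one_mulVec] at h2
        funext l
        have := congrFun h2 l
        simp only [Pi.smul_apply, smul_eq_mul, Pi.zero_apply] at this
        have := mul_eq_zero.1 this
        rcases this with h | h
        · exact absurd h (ne_of_gt hdetG)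
        · exact h
      apply hu0
      rw [hu, ha0]
      simp
    -- adjugate G i i < 0 via permutation reduction to index 0
    have hadjneg : Matrix.adjugate G i i < 0 := by
      set e := Equiv.swap (0 : Fin 4) i with hedef
      have he0 : e 0 = i := Equiv.swap_apply_left 0 i
      have hsub : (Matrix.of fun k l => bil (v (e k)) (v (e l))) = G.submatrix e e := by
        ext k l; simp [hGdef, Matrix.submatrix_apply]
      have := adj00_neg (fun k => v (e k)) (fun k => hunit (e k))
        (fun k l hkl => hlt (e k) (e l) (fun h => hkl (e.injective h)))
      rw [hsub, Matrix.adjugate_submatrix_equiv_self] at this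
      simpa [Matrix.submatrix_apply, he0] using this
    -- conclude
    have : G.det * bil u u < 0 := by
      rw [hbilu]
      calc G.det * (a i * b i) = (G.det * a i) * b i := by ring
        _ = (Matrix.adjugate G i i * b i) * b i := by rw [hadji]
        _ = Matrix.adjugate G i i * (b i * b i) := by ring
        _ < 0 := mul_neg_of_neg_of_pos hadjneg (mul_self_pos.mpr hbi)
    by_contra hcon
    push_neg at hcon
    nlinarith
  refine ⟨key, ?_⟩
  intro i u hpos habs horth
  have hu0 : u ≠ 0 := by
    intro h
    rw [h] at hpos
    simp [bil] at hpos
  have hneg := key i u hu0 horth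
  rw [abs_of_neg hneg] at habs
  linarith
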